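/- Let the assumptions be as in the context, and suppose Φ(z) < Φ(0) for all 0 < z ≤ 1. Then there exists δ₀ > 0 such that for all 0 < δ < δ₀, the maximum of Φ̃_δ over the boundary of the square [0,1]² is attained at (0,0), i.e. max_{(α,β)∈∂[0,1]²} Φ̃_δ(α,β) = Φ̃_δ(0,0) = 1 − d/k − δ. -/

import Mathlib

/-!
Write `G(α) = D(1 - K'(α)/k)`, so that
`Φ̃_δ(α,β) = Φ(α) + (e^{-3δβ²} - 1) G(α) - δ + 3δβ² - 2δβ³` with `G(0) = 1` and `G ≥ 0`.
On the edge `β = 0` this is `Φ(α) - δ`. On the edge `α = 0`, the bound `e^{-x} - 1 + x ≤ x²`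
leaves at most `9δ²β⁴ - 2δβ³ ≤ 0` beyond `Φ(0) - δ`. On `[ε,1]`, compactness gives
`Φ ≤ Φ(0) - c` with `c > 0`, and the `β`-terms add at most `δ`, so `δ < c` suffices. What remains
is the edge `β = 1` near `α = 0`, where continuity gives `G ≥ 5/6`, hence `(e^{-3δ} - 1) G ≤ -δ`
for `δ ≤ 1/5`.
-/

open scoped ENNReal

namespace DegreeModel

/-- The probability generating function `E[x^d]` of an integer-valued random
variable with law `ν`. -/
noncomputable def pgf (ν : PMF ℕ) (x : ℝ) : ℝ := ∑' i : ℕ, (ν i).toReal * x ^ i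

/-- The derivative `Σ_i P[d=i]·i·x^{i−1}` of the probability generating function. -/
noncomputable def pgf' (ν : PMF ℕ) (x : ℝ) : ℝ := ∑' i : ℕ, (ν i).toReal * i * x ^ (i - 1)

/-- The mean `E[d]` of an integer-valued random variable with law `ν`. -/
noncomputable def mean (ν : PMF ℕ) : ℝ := ∑' i : ℕ, (ν i).toReal * i

/-- The function `Φ(z) = D(1 − K'(z)/k) − (d/k)(1 − K(z) − (1−z)K'(z))`. -/
noncomputable def Phi (νd νk : PMF ℕ) (z : ℝ) : ℝ :=
  pgf νd (1 - pgf' νk z / mean νk) -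
    (mean νd / mean νk) * (1 - pgf νk z - (1 - z) * pgf' νk z)

/-- The function `Φ̃_δ(α,β) = Φ(α) + (exp(−3δβ²) − 1)·D(1 − K'(α)/k) − δ + 3δβ² − 2δβ³`. -/
noncomputable def PhiTilde (νd νk : PMF ℕ) (δ α β : ℝ) : ℝ :=
  Phi νd νk α + (Real.exp (-(3 * δ * β ^ 2)) - 1) * pgf νd (1 - pgf' νk α / mean νk)
    - δ + 3 * δ * β ^ 2 - 2 * δ * β ^ 3

end DegreeModel

open Set Real

theorem PMF.summable_toReal {α : Type*} (p : PMF α) : Summable fun a => (p a).toReal :=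
  ENNReal.summable_toReal (by simp [p.tsum_coe])

theorem PMF.tsum_toReal {α : Type*} (p : PMF α) : ∑' a, (p a).toReal = 1 := by
  rw [← ENNReal.tsum_toReal_eq p.apply_ne_top, p.tsum_coe, ENNReal.toReal_one]

namespace DegreeModel

section PowerSeries

variable {c : ℕ → ℝ} (e : ℕ → ℕ)

lemma tsum_mul_pow_nonneg (hc : ∀ i, 0 ≤ c i) {x : ℝ} (hx : 0 ≤ x) :
    0 ≤ ∑' i, c i * x ^ e i :=
  tsum_nonneg fun i => mul_nonneg (hc i) (pow_nonneg hx _)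

lemma mul_pow_le_of_mem_Icc (hc : ∀ i, 0 ≤ c i) {x : ℝ} (hx : x ∈ Icc (0 : ℝ) 1) (i : ℕ) :
    c i * x ^ e i ≤ c i :=
  mul_le_of_le_one_right (hc i) (pow_le_one₀ hx.1 hx.2)

lemma tsum_mul_pow_le (hc : ∀ i, 0 ≤ c i) (hs : Summable c) {x : ℝ} (hx : x ∈ Icc (0 : ℝ) 1) :
    ∑' i, c i * x ^ e i ≤ ∑' i, c i :=
  (hs.of_nonneg_of_le (fun i => mul_nonneg (hc i) (pow_nonneg hx.1 _))
    (mul_pow_le_of_mem_Icc e hc hx)).tsum_le_tsum (mul_pow_le_of_mem_Icc e hc hx) hs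

lemma continuousOn_tsum_mul_pow (hc : ∀ i, 0 ≤ c i) (hs : Summable c) :
    ContinuousOn (fun x : ℝ => ∑' i, c i * x ^ e i) (Icc (-1) 1) := by
  refine continuousOn_tsum (fun i => (continuous_const.mul (continuous_pow _)).continuousOn) hs
    fun i x hx => ?_
  rw [norm_mul, norm_pow, Real.norm_of_nonneg (hc i)]
  exact mul_le_of_le_one_right (hc i) (pow_le_one₀ (norm_nonneg x) (abs_le.2 hx))

end PowerSeries

section GeneratingFunctions

variable (ν : PMF ℕ)

lemma pgf_one : pgf ν 1 = 1 := by
  simp only [pgf, one_pow, mul_one, ν.tsum_toReal]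

lemma pgf_zero : pgf ν 0 = (ν 0).toReal := by
  rw [pgf, tsum_eq_single 0 fun i hi => by simp [hi]]
  simp

lemma pgf'_zero : pgf' ν 0 = (ν 1).toReal := by
  rw [pgf', tsum_eq_single 1 fun i hi => ?_]
  · simp
  · rcases Nat.lt_or_gt_of_ne hi with h | h
    · simp [Nat.lt_one_iff.1 h]
    · simp [zero_pow (Nat.sub_ne_zero_of_lt h)]

lemma pgf_mem_Icc {x : ℝ} (hx : x ∈ Icc (0 : ℝ) 1) : pgf ν x ∈ Icc (0 : ℝ) 1 :=
  ⟨tsum_mul_pow_nonneg _ (fun _ => ENNReal.toReal_nonneg) hx.1,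
    ν.tsum_toReal ▸ tsum_mul_pow_le _ (fun _ => ENNReal.toReal_nonneg) ν.summable_toReal hx⟩

lemma continuousOn_pgf : ContinuousOn (pgf ν) (Icc (-1) 1) :=
  continuousOn_tsum_mul_pow _ (fun _ => ENNReal.toReal_nonneg) ν.summable_toReal

variable {ν}

lemma toReal_mul_cast_nonneg (i : ℕ) : 0 ≤ (ν i).toReal * i :=
  mul_nonneg ENNReal.toReal_nonneg i.cast_nonneg

lemma summable_toReal_mul_of_tsum_sq_mul_ne_top (h : ∑' i : ℕ, (i : ℝ≥0∞) ^ 2 * ν i ≠ ⊤) :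
    Summable fun i => (ν i).toReal * i := by
  refine (ENNReal.summable_toReal h).of_nonneg_of_le toReal_mul_cast_nonneg fun i => ?_
  rw [ENNReal.toReal_mul, ENNReal.toReal_pow, ENNReal.toReal_natCast, mul_comm]
  exact mul_le_mul_of_nonneg_right (by exact_mod_cast Nat.le_self_pow two_ne_zero i)
    ENNReal.toReal_nonneg

lemma le_mean_of_forall_mem_support {n : ℕ} (hs : Summable fun i => (ν i).toReal * i)
    (hn : ∀ i ∈ ν.support, n ≤ i) : (n : ℝ) ≤ mean ν := by
  calc (n : ℝ) = ∑' i, n * (ν i).toReal := by rw [tsum_mul_left, ν.tsum_toReal, mul_one]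
    _ ≤ mean ν := (ν.summable_toReal.mul_left (n : ℝ)).tsum_le_tsum (fun i => ?_) hs
  by_cases hi : i ∈ ν.support
  · rw [mul_comm]
    exact mul_le_mul_of_nonneg_left (by exact_mod_cast hn i hi) ENNReal.toReal_nonneg
  · simp [(PMF.apply_eq_zero_iff ν i).2 hi]

lemma pgf'_nonneg {x : ℝ} (hx : 0 ≤ x) : 0 ≤ pgf' ν x :=
  tsum_mul_pow_nonneg _ toReal_mul_cast_nonneg hx

lemma pgf'_le_mean (hs : Summable fun i => (ν i).toReal * i) {x : ℝ} (hx : x ∈ Icc (0 : ℝ) 1) :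
    pgf' ν x ≤ mean ν :=
  tsum_mul_pow_le _ toReal_mul_cast_nonneg hs hx

lemma continuousOn_pgf' (hs : Summable fun i => (ν i).toReal * i) :
    ContinuousOn (pgf' ν) (Icc (-1) 1) :=
  continuousOn_tsum_mul_pow _ toReal_mul_cast_nonneg hs

end GeneratingFunctions

section Composite

variable {νd νk : PMF ℕ}

lemma one_sub_pgf'_div_mean_mem_Icc (hs : Summable fun i => (νk i).toReal * i)
    (hk : 0 < mean νk) {x : ℝ} (hx : x ∈ Icc (0 : ℝ) 1) :
    1 - pgf' νk x / mean νk ∈ Icc (0 : ℝ) 1 :=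
  ⟨sub_nonneg.2 ((div_le_one hk).2 (pgf'_le_mean hs hx)),
    sub_le_self _ (div_nonneg (pgf'_nonneg hx.1) hk.le)⟩

lemma continuousOn_pgf_one_sub_pgf'_div_mean (hs : Summable fun i => (νk i).toReal * i)
    (hk : 0 < mean νk) :
    ContinuousOn (fun x => pgf νd (1 - pgf' νk x / mean νk)) (Icc 0 1) :=
  (continuousOn_pgf νd).comp
    (continuousOn_const.sub (((continuousOn_pgf' hs).mono
      (Icc_subset_Icc (by norm_num) le_rfl)).div_const _))
    fun x hx => Icc_subset_Icc (by norm_num) le_rfl (one_sub_pgf'_div_mean_mem_Icc hs hk hx)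

lemma continuousOn_Phi (hs : Summable fun i => (νk i).toReal * i) (hk : 0 < mean νk) :
    ContinuousOn (Phi νd νk) (Icc 0 1) := by
  have hsub : Icc (0 : ℝ) 1 ⊆ Icc (-1) 1 := Icc_subset_Icc (by norm_num) le_rfl
  exact (continuousOn_pgf_one_sub_pgf'_div_mean hs hk).sub (continuousOn_const.mul
    ((continuousOn_const.sub ((continuousOn_pgf νk).mono hsub)).sub
      ((continuousOn_const.sub continuousOn_id).mul ((continuousOn_pgf' hs).mono hsub))))

lemma Phi_zero (hk0 : νk 0 = 0) (hk1 : νk 1 = 0) : Phi νd νk 0 = 1 - mean νd / mean νk := by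
  simp [Phi, pgf_zero, pgf'_zero, hk0, hk1, pgf_one]

lemma PhiTilde_zero_zero (δ : ℝ) : PhiTilde νd νk δ 0 0 = Phi νd νk 0 - δ := by
  simp [PhiTilde]

end Composite

lemma exp_neg_sub_one_add_le_sq {x : ℝ} (h0 : 0 ≤ x) (h1 : x ≤ 1) :
    exp (-x) - 1 + x ≤ x ^ 2 := by
  have := abs_exp_sub_one_sub_id_le (x := -x) (by rwa [abs_neg, abs_of_nonneg h0])
  nlinarith [(abs_le.mp this).2]

lemma exp_neg_three_mul_sq_sub_one_add_le {δ β : ℝ} (hδ0 : 0 ≤ δ) (hδ : δ ≤ 1 / 5)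
    (hβ : β ∈ Icc (0 : ℝ) 1) :
    exp (-(3 * δ * β ^ 2)) - 1 + 3 * δ * β ^ 2 - 2 * δ * β ^ 3 ≤ 0 := by
  obtain ⟨hβ0, hβ1⟩ := hβ
  have hquad := exp_neg_sub_one_add_le_sq (x := 3 * δ * β ^ 2) (by positivity) (by nlinarith)
  have : 0 ≤ δ * β ^ 3 * (2 - 9 * δ * β) := mul_nonneg (by positivity) (by nlinarith)
  nlinarith

lemma exp_neg_three_mul_sub_one_mul_le {δ g : ℝ} (hδ0 : 0 ≤ δ) (hδ : δ ≤ 1 / 5)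
    (hg : 5 / 6 ≤ g) : (exp (-(3 * δ)) - 1) * g ≤ -δ := by
  have hquad := exp_neg_sub_one_add_le_sq (x := 3 * δ) (by positivity) (by linarith)
  have hexp : exp (-(3 * δ)) - 1 ≤ -(6 / 5) * δ := by nlinarith
  nlinarith

theorem exists_pos_forall_boundary_le {Φ G : ℝ → ℝ} (hΦ : ContinuousOn Φ (Icc 0 1))
    (hG : ContinuousWithinAt G (Icc 0 1) 0) (hG0 : G 0 = 1)
    (hG_nonneg : ∀ α ∈ Icc (0 : ℝ) 1, 0 ≤ G α) (hlt : ∀ z, 0 < z → z ≤ 1 → Φ z < Φ 0) :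
    ∃ δ₀ > 0, ∀ δ, 0 < δ → δ < δ₀ → ∀ α ∈ Icc (0 : ℝ) 1, ∀ β ∈ Icc (0 : ℝ) 1,
      (α = 0 ∨ α = 1 ∨ β = 0 ∨ β = 1) →
        Φ α + (exp (-(3 * δ * β ^ 2)) - 1) * G α - δ + 3 * δ * β ^ 2 - 2 * δ * β ^ 3
          ≤ Φ 0 - δ := by
  obtain ⟨ε, hε0, hε1, hGε⟩ : ∃ ε > 0, ε ≤ 1 ∧ ∀ α ∈ Icc (0 : ℝ) 1, α < ε → 5 / 6 ≤ G α := by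
    have hev : ∀ᶠ α in nhdsWithin 0 (Icc (0 : ℝ) 1), 5 / 6 < G α :=
      hG.eventually_const_lt (by rw [hG0]; norm_num)
    obtain ⟨ε, hε0, hε⟩ := Metric.mem_nhdsWithin_iff.mp hev
    refine ⟨min ε 1, lt_min hε0 one_pos, min_le_right _ _, fun α hα hαε => (hε ⟨?_, hα⟩).le⟩
    rw [Metric.mem_ball, Real.dist_eq, sub_zero, abs_of_nonneg hα.1]
    exact hαε.trans_le (min_le_left _ _)
  obtain ⟨z₀, hz₀, hmax⟩ := isCompact_Icc.exists_isMaxOn (nonempty_Icc.2 hε1)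
    (hΦ.mono (Icc_subset_Icc hε0.le le_rfl))
  have hz₀lt : Φ z₀ < Φ 0 := hlt z₀ (hε0.trans_le hz₀.1) hz₀.2
  refine ⟨min (Φ 0 - Φ z₀) (1 / 5), lt_min (sub_pos.2 hz₀lt) (by norm_num),
    fun δ hδ0 hδ α hα β hβ hbd => ?_⟩
  have hδz₀ : δ < Φ 0 - Φ z₀ := hδ.trans_le (min_le_left _ _)
  have hδ5 : δ ≤ 1 / 5 := (hδ.trans_le (min_le_right _ _)).le
  have hΦα : Φ α ≤ Φ 0 := by
    rcases hα.1.eq_or_lt with rfl | hα0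
    · exact le_rfl
    · exact (hlt α hα0 hα.2).le
  rcases eq_or_ne β 0 with rfl | hβ0
  · simp only [ne_eq, OfNat.ofNat_ne_zero, not_false_eq_true, zero_pow, mul_zero, neg_zero,
      exp_zero, sub_self, zero_mul]
    linarith
  rcases eq_or_ne α 0 with rfl | hα0
  · rw [hG0]
    linarith [exp_neg_three_mul_sq_sub_one_add_le hδ0.le hδ5 hβ]
  rcases le_or_gt ε α with hεα | hαε
  · have hΦz₀ : Φ α ≤ Φ z₀ := hmax ⟨hεα, hα.2⟩
    have hexp : exp (-(3 * δ * β ^ 2)) ≤ 1 := exp_le_one_iff.2 (by nlinarith [hβ.1])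
    have hcube : 0 ≤ (1 - β) ^ 2 * (1 + 2 * β) := by nlinarith [hβ.1]
    nlinarith [mul_nonpos_of_nonpos_of_nonneg (sub_nonpos.2 hexp) (hG_nonneg α hα)]
  · obtain rfl : β = 1 := by
      rcases hbd with h | h | h | h
      · exact absurd h hα0
      · exact absurd (h ▸ hαε) (not_lt.2 hε1)
      · exact absurd h hβ0
      · exact h
    have := exp_neg_three_mul_sub_one_mul_le hδ0.le hδ5 (hGε α hα hαε)
    simp only [one_pow, mul_one]
    linarith

end DegreeModel

open DegreeModel

theorem stmt7_general (νd νk : PMF ℕ)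
    (hmomk : ∑' i : ℕ, (i : ℝ≥0∞) ^ 2 * νk i ≠ ⊤)
    (hk3 : ∀ i ∈ νk.support, 3 ≤ i)
    (hstar : ∀ z : ℝ, 0 < z → z ≤ 1 → Phi νd νk z < Phi νd νk 0) :
    ∃ δ₀ : ℝ, 0 < δ₀ ∧ ∀ δ : ℝ, 0 < δ → δ < δ₀ →
      (∀ α ∈ Set.Icc (0 : ℝ) 1, ∀ β ∈ Set.Icc (0 : ℝ) 1,
        (α = 0 ∨ α = 1 ∨ β = 0 ∨ β = 1) →
          PhiTilde νd νk δ α β ≤ PhiTilde νd νk δ 0 0) ∧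
      PhiTilde νd νk δ 0 0 = 1 - mean νd / mean νk - δ := by
  have hk0 : νk 0 = 0 := (PMF.apply_eq_zero_iff νk 0).2 fun h => absurd (hk3 0 h) (by norm_num)
  have hk1 : νk 1 = 0 := (PMF.apply_eq_zero_iff νk 1).2 fun h => absurd (hk3 1 h) (by norm_num)
  have hs := summable_toReal_mul_of_tsum_sq_mul_ne_top hmomk
  have hmean : 0 < mean νk :=
    (by norm_num : (0 : ℝ) < (3 : ℕ)).trans_le (le_mean_of_forall_mem_support hs hk3)
  obtain ⟨δ₀, hδ₀, hbound⟩ := exists_pos_forall_boundary_le (continuousOn_Phi hs hmean)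
    ((continuousOn_pgf_one_sub_pgf'_div_mean hs hmean).continuousWithinAt ⟨le_rfl, zero_le_one⟩)
    (by simp [pgf'_zero, hk1, pgf_one])
    (fun α hα => (pgf_mem_Icc νd (one_sub_pgf'_div_mean_mem_Icc hs hmean hα)).1) hstar
  refine ⟨δ₀, hδ₀, fun δ hδ hδδ₀ => ⟨?_, by rw [PhiTilde_zero_zero, Phi_zero hk0 hk1]⟩⟩
  rw [PhiTilde_zero_zero]
  exact hbound δ hδ hδδ₀

/-- Let `d ≥ 0` and `k ≥ 3` be integer-valued random variables
with `E[d²] + E[k²] < ∞`, and suppose `Φ(z) < Φ(0)` for all `0 < z ≤ 1`.  Then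
there exists `δ₀ > 0` such that for all `0 < δ < δ₀`, the maximum of `Φ̃_δ`
over the boundary of the square `[0,1]²` is attained at `(0,0)`, i.e.
`max_{(α,β)∈∂[0,1]²} Φ̃_δ(α,β) = Φ̃_δ(0,0) = 1 − d/k − δ`. -/
theorem stmt7 (νd νk : PMF ℕ)
    (hmomd : ∑' i : ℕ, (i : ℝ≥0∞) ^ 2 * νd i ≠ ⊤)
    (hmomk : ∑' i : ℕ, (i : ℝ≥0∞) ^ 2 * νk i ≠ ⊤)
    (hk3 : ∀ i ∈ νk.support, 3 ≤ i)
    (hstar : ∀ z : ℝ, 0 < z → z ≤ 1 → Phi νd νk z < Phi νd νk 0) :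
    ∃ δ₀ : ℝ, 0 < δ₀ ∧ ∀ δ : ℝ, 0 < δ → δ < δ₀ →
      (∀ α ∈ Set.Icc (0 : ℝ) 1, ∀ β ∈ Set.Icc (0 : ℝ) 1,
        (α = 0 ∨ α = 1 ∨ β = 0 ∨ β = 1) →
          PhiTilde νd νk δ α β ≤ PhiTilde νd νk δ 0 0) ∧
      PhiTilde νd νk δ 0 0 = 1 - mean νd / mean νk - δ :=
  stmt7_general νd νk hmomk hk3 hstar
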